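/- arXiv:2103.00922 — 5 statements merged into one kernel-verified Lean document; each statement's English description precedes it below -/
import Mathlib

section
/- Every Steiner triple system on a finite set V with |V| = n > 1 contains a spreading set U with 2^{|U|} ≤ n + 1 (equivalently, |U| ≤ log₂(n+1)). -/
/-- A Steiner triple system on `V`: a family `T` of 3-element `Finset`s such that
every pair of distinct points lies in exactly one member of `T`. -/
def IsSTS {V : Type*} (T : Set (Finset V)) : Prop :=
  (∀ t ∈ T, t.card = 3) ∧
    ∀ x y : V, x ≠ y → ∃! t : Finset V, t ∈ T ∧ x ∈ t ∧ y ∈ t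

/-- `W` is closed w.r.t. the triple system `T`: whenever a triple of `T` contains two
points of `W`, all (in particular the third) of its points lie in `W`. -/
def StsClosed {V : Type*} (T : Set (Finset V)) (W : Set V) : Prop :=
  ∀ t ∈ T, ∀ x ∈ t, ∀ y ∈ t, x ≠ y → x ∈ W → y ∈ W → ∀ z ∈ t, z ∈ W

/-- The closure of `S` w.r.t. `T`: the smallest closed set containing `S`. -/
def stsCl {V : Type*} (T : Set (Finset V)) (S : Set V) : Set V :=
  ⋂₀ {W : Set V | S ⊆ W ∧ StsClosed T W}

/-- `S` is a spreading set: its closure is the whole point set. -/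
def IsSpreading {V : Type*} (T : Set (Finset V)) (S : Set V) : Prop :=
  stsCl T S = Set.univ

/-- `S` is a minimal spreading set: it is spreading but no proper subset is. -/
def IsMinSpreading {V : Type*} (T : Set (Finset V)) (S : Set V) : Prop :=
  IsSpreading T S ∧ ∀ S' : Set V, S' ⊂ S → ¬ IsSpreading T S'

section Aux
variable {V : Type*} {T : Set (Finset V)} {S W : Set V}

lemma subset_stsCl : S ⊆ stsCl T S := fun x hx =>
  Set.mem_sInter.2 fun W hW => hW.1 hx

lemma stsCl_closed : StsClosed T (stsCl T S) := by
  intro t ht x hx y hy hxy hxc hyc z hz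
  refine Set.mem_sInter.2 fun W hW => ?_
  exact hW.2 t ht x hx y hy hxy (Set.mem_sInter.1 hxc W hW) (Set.mem_sInter.1 hyc W hW) z hz

lemma stsCl_min (h1 : S ⊆ W) (h2 : StsClosed T W) : stsCl T S ⊆ W :=
  Set.sInter_subset_of_mem ⟨h1, h2⟩

/-- third point of a triple -/
lemma third_point (hT : IsSTS T) {t : Finset V} (ht : t ∈ T) {x y : V}
    (hx : x ∈ t) (hy : y ∈ t) (hxy : x ≠ y) :
    ∃ z ∈ t, z ≠ x ∧ z ≠ y := by
  classical
  have hsub : ({x, y} : Finset V) ⊆ t := by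
    intro a ha; simp at ha; rcases ha with rfl | rfl <;> assumption
  have hcard : ({x, y} : Finset V).card = 2 := Finset.card_pair hxy
  have : (t \ {x, y}).Nonempty := by
    rw [← Finset.card_pos, Finset.card_sdiff_of_subset hsub, hT.1 t ht, hcard]; norm_num
  obtain ⟨z, hz⟩ := this
  simp only [Finset.mem_sdiff, Finset.mem_insert, Finset.mem_singleton] at hz
  exact ⟨z, hz.1, fun h => hz.2 (Or.inl h), fun h => hz.2 (Or.inr h)⟩

lemma step_lemma [Fintype V] (hT : IsSTS T) (hW : StsClosed T W) {x : V} (hx : x ∉ W) :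
    2 * W.ncard + 1 ≤ (stsCl T (insert x W)).ncard := by
  classical
  have hfin : ∀ s : Set V, s.Finite := fun s => s.toFinite
  -- third point function
  have key : ∀ w ∈ W, ∃ z : V, z ∉ W ∧ z ≠ x ∧ z ∈ stsCl T (insert x W) ∧
      ∃ t ∈ T, x ∈ t ∧ w ∈ t ∧ z ∈ t := by
    intro w hw
    have hxw : x ≠ w := fun h => hx (h ▸ hw)
    obtain ⟨t, ⟨ht, hxt, hwt⟩, -⟩ := hT.2 x w hxw
    obtain ⟨z, hzt, hzx, hzw⟩ := third_point hT ht hxt hwt hxw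
    have hxcl : x ∈ stsCl T (insert x W) := subset_stsCl (Set.mem_insert _ _)
    have hwcl : w ∈ stsCl T (insert x W) := subset_stsCl (Set.mem_insert_of_mem _ hw)
    have hzcl : z ∈ stsCl T (insert x W) :=
      stsCl_closed t ht x hxt w hwt hxw hxcl hwcl z hzt
    have hznW : z ∉ W := by
      intro hzW
      exact hx (hW t ht w hwt z hzt (Ne.symm hzw) hw hzW x hxt)
    exact ⟨z, hznW, hzx, hzcl, t, ht, hxt, hwt, hzt⟩
  choose f hf1 hf2 hf3 hf4 using key
  set g : V → V := fun w => if h : w ∈ W then f w h else x with hg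
  have hgW : ∀ w (hw : w ∈ W), g w = f w hw := fun w hw => dif_pos hw
  -- injectivity of g on W
  have hinj : Set.InjOn g W := by
    intro w1 h1 w2 h2 heq
    rw [hgW w1 h1, hgW w2 h2] at heq
    obtain ⟨t1, ht1, hxt1, hw1t1, hz1t1⟩ := hf4 w1 h1
    obtain ⟨t2, ht2, hxt2, hw2t2, hz2t2⟩ := hf4 w2 h2
    have hzx : f w1 h1 ≠ x := hf2 w1 h1
    have huniq := hT.2 x (f w1 h1) (Ne.symm hzx)
    obtain ⟨t, -, ht_uniq⟩ := huniq
    have e1 : t1 = t := ht_uniq t1 ⟨ht1, hxt1, hz1t1⟩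
    have e2 : t2 = t := ht_uniq t2 ⟨ht2, hxt2, heq ▸ hz2t2⟩
    -- now w1, w2 ∈ t, both ≠ x and ≠ f w1 h1; t has card 3
    by_contra hne
    have hct : t1.card = 3 := hT.1 t1 ht1
    have hsub : ({x, f w1 h1, w1, w2} : Finset V) ⊆ t1 := by
      intro a ha
      simp only [Finset.mem_insert, Finset.mem_singleton] at ha
      rcases ha with rfl | rfl | rfl | rfl
      · exact hxt1
      · exact hz1t1
      · exact hw1t1
      · rw [e1, ← e2]; exact hw2t2
    have hw1x : w1 ≠ x := fun h => hx (h ▸ h1)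
    have hw2x : w2 ≠ x := fun h => hx (h ▸ h2)
    have hw1z : w1 ≠ f w1 h1 := by
      intro h; exact hf1 w1 h1 (h ▸ h1)
    have hw2z : w2 ≠ f w1 h1 := by
      intro h; exact hf1 w1 h1 (h ▸ h2)
    have hc4 : ({x, f w1 h1, w1, w2} : Finset V).card = 4 := by
      rw [Finset.card_insert_of_notMem, Finset.card_insert_of_notMem,
        Finset.card_insert_of_notMem, Finset.card_singleton]
      · simp [hne]
      · simp [Ne.symm hw1z, Ne.symm hw2z]
      · simp [Ne.symm hw1x, Ne.symm hw2x, Ne.symm hzx]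
    have := Finset.card_le_card hsub
    omega
  -- the three disjoint pieces
  have hsub1 : insert x W ∪ g '' W ⊆ stsCl T (insert x W) := by
    rintro a (ha | ⟨w, hw, rfl⟩)
    · exact subset_stsCl ha
    · rw [hgW w hw]; exact hf3 w hw
  have hdisj : Disjoint (insert x W) (g '' W) := by
    rw [Set.disjoint_right]
    rintro a ⟨w, hw, rfl⟩
    rw [hgW w hw]
    rintro (h | h)
    · exact hf2 w hw h
    · exact hf1 w hw h
  have hcount : (insert x W ∪ g '' W).ncard = 2 * W.ncard + 1 := by
    rw [Set.ncard_union_eq hdisj (hfin _) (hfin _),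
      Set.ncard_insert_of_notMem hx (hfin _), Set.ncard_image_of_injOn hinj]
    ring
  calc 2 * W.ncard + 1 = (insert x W ∪ g '' W).ncard := hcount.symm
    _ ≤ (stsCl T (insert x W)).ncard := Set.ncard_le_ncard hsub1 (hfin _)

end Aux

section Main
variable {V : Type*} [Fintype V] {T : Set (Finset V)}

lemma aux_induction (hT : IsSTS T) : ∀ m : ℕ, ∀ U : Finset V,
    Fintype.card V - (stsCl T ↑U).ncard ≤ m →
    2 ^ U.card ≤ (stsCl T ↑U).ncard + 1 →
    ∃ U' : Finset V, stsCl T ↑U' = Set.univ ∧ 2 ^ U'.card ≤ Fintype.card V + 1 := by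
  classical
  intro m
  induction m with
  | zero =>
    intro U hm hcard
    have hle : Fintype.card V ≤ (stsCl T ↑U).ncard := by omega
    have huniv : stsCl T ↑U = Set.univ := by
      apply Set.eq_of_subset_of_ncard_le (Set.subset_univ _) _ (Set.toFinite _)
      rwa [Set.ncard_univ, Nat.card_eq_fintype_card]
    refine ⟨U, huniv, ?_⟩
    rw [huniv, Set.ncard_univ, Nat.card_eq_fintype_card] at hcard
    exact hcard
  | succ m ih =>
    intro U hm hcard
    by_cases h : stsCl T ↑U = Set.univ
    · refine ⟨U, h, ?_⟩
      rw [h, Set.ncard_univ, Nat.card_eq_fintype_card] at hcard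
      exact hcard
    · obtain ⟨x, hx⟩ : ∃ x, x ∉ stsCl T ↑U := by
        by_contra hc
        push_neg at hc
        exact h (Set.eq_univ_of_forall hc)
      have hstep := step_lemma hT (stsCl_closed (S := ↑U)) hx
      -- stsCl T (insert x (stsCl T ↑U)) ⊆ stsCl T (insert x ↑U)
      have hsub : stsCl T (insert x (stsCl T (↑U : Set V))) ⊆ stsCl T (insert x (↑U : Set V)) := by
        apply stsCl_min _ stsCl_closed
        intro a ha
        rcases ha with rfl | ha
        · exact subset_stsCl (Set.mem_insert _ _)
        · exact stsCl_min (Set.subset_insert _ _ |>.trans subset_stsCl) stsCl_closed ha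
      have hge : 2 * (stsCl T (↑U : Set V)).ncard + 1 ≤ (stsCl T (insert x (↑U : Set V))).ncard :=
        le_trans hstep (Set.ncard_le_ncard hsub (Set.toFinite _))
      have hxU : x ∉ U := fun hxU => hx (subset_stsCl hxU)
      have hcoe : ((insert x U : Finset V) : Set V) = insert x (↑U : Set V) := by
        simp
      have hlt : (stsCl T (↑U : Set V)).ncard < Fintype.card V := by
        have hss : stsCl T (↑U : Set V) ⊂ Set.univ :=
          (Set.ssubset_univ_iff).2 h
        have := Set.ncard_lt_ncard hss (Set.toFinite _)
        rwa [Set.ncard_univ, Nat.card_eq_fintype_card] at this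
      refine ih (insert x U) ?_ ?_
      · rw [hcoe]; omega
      · rw [hcoe, Finset.card_insert_of_notMem hxU, pow_succ]
        omega

end Main


/-- In any Steiner triple system on a finite set `V` with `|V| = n > 1` there is a
spreading set `U` with `2 ^ |U| ≤ n + 1`, i.e. `|U| ≤ log₂ (n + 1)`. -/
theorem exists_spreading_card_le {V : Type*} [Fintype V] (T : Set (Finset V))
    (hT : IsSTS T) (hn : 1 < Fintype.card V) :
    ∃ U : Finset V, IsSpreading T ↑U ∧ 2 ^ U.card ≤ Fintype.card V + 1 := by
  obtain ⟨U, h1, h2⟩ := aux_induction hT (Fintype.card V) ∅ (by omega) (by simp)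
  exact ⟨U, h1, h2⟩
end

section
/- Let F be a finite field with q elements and let U be a set of points of the projective space PG(n,q), i.e., of the projectivization of F^{n+1}. Suppose that for every pair of distinct points P, Q, the line through P and Q (the set of points whose representing 1-dimensional subspace is contained in the span of the representing subspaces of P and Q) meets U in exactly 0, 1, or q+1 points. Then U is the set of points of a projective subspace of PG(n,q) (i.e., U is the carrier of a Projectivization.Subspace: whenever nonzero vectors v, w with v + w ≠ 0 represent points of U, the point represented by v + w also lies in U). -/
/-!
A set `U` meeting every line in `0`, `1` or `q + 1` points contains the whole line through any two
of its points `⟨v⟩ ≠ ⟨w⟩`, because a line, being the projectivization of the 2-dimensional space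
`⟨v, w⟩`, has exactly `q + 1` points; and the point `⟨v + w⟩` lies on that line.
If `⟨v⟩ = ⟨w⟩`, then `⟨v + w⟩` is that same point.
-/

open scoped LinearAlgebra.Projectivization
open Module

namespace Projectivization

variable {K V : Type*} [DivisionRing K] [AddCommGroup V] [Module K V]

def line (P Q : ℙ K V) : Set (ℙ K V) :=
  {R | R.submodule ≤ P.submodule ⊔ Q.submodule}

theorem left_mem_line (P Q : ℙ K V) : P ∈ line P Q := le_sup_left (b := Q.submodule)

theorem right_mem_line (P Q : ℙ K V) : Q ∈ line P Q := le_sup_right (a := P.submodule)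

theorem range_map_subtype (W : Submodule K V) :
    Set.range (map W.subtype W.injective_subtype) = {R : ℙ K V | R.submodule ≤ W} := by
  ext R
  constructor
  · rintro ⟨R', rfl⟩
    induction R' using ind with | h u hu =>
    simp [map_mk, submodule_mk, Submodule.span_singleton_le_iff_mem]
  · induction R using ind with | h v hv =>
    intro hvW
    rw [Set.mem_ofPred_eq, submodule_mk, Submodule.span_singleton_le_iff_mem] at hvW
    exact ⟨mk K ⟨v, hvW⟩ (by simpa using hv), map_mk _ _ _ _⟩

theorem ncard_setOf_submodule_le (W : Submodule K V) :
    {R : ℙ K V | R.submodule ≤ W}.ncard = Nat.card (ℙ K W) := by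
  rw [← range_map_subtype, Set.ncard_range_of_injective (map_injective _ _)]

theorem eq_of_submodule_le {P R : ℙ K V} (h : R.submodule ≤ P.submodule) : R = P := by
  have : FiniteDimensional K P.submodule := .of_finrank_eq_succ P.finrank_submodule
  exact submodule_injective <|
    Submodule.eq_of_le_of_finrank_eq h (by rw [finrank_submodule, finrank_submodule])

theorem line_self (P : ℙ K V) : line P P = {P} := by
  ext R
  refine ⟨fun hR => eq_of_submodule_le ((sup_idem P.submodule).le.trans' hR), ?_⟩
  rintro rfl
  exact left_mem_line R R

theorem sup_submodule_eq_span_pair (P Q : ℙ K V) :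
    P.submodule ⊔ Q.submodule = Submodule.span K (Set.range ![P.rep, Q.rep]) := by
  rw [Matrix.range_cons_cons_empty, submodule_eq, submodule_eq, ← Submodule.span_union,
    Set.singleton_union]

theorem finrank_sup_submodule_of_ne {P Q : ℙ K V} (hPQ : P ≠ Q) :
    finrank K ↥(P.submodule ⊔ Q.submodule) = 2 := by
  rw [← independent_pair_iff_ne, independent_iff] at hPQ
  have hrep : Projectivization.rep ∘ ![P, Q] = ![P.rep, Q.rep] := by ext i; fin_cases i <;> rfl
  rw [sup_submodule_eq_span_pair, finrank_span_eq_card (hrep ▸ hPQ), Fintype.card_fin]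

theorem mk_add_mem_line {v w : V} (hv : v ≠ 0) (hw : w ≠ 0) (hvw : v + w ≠ 0) :
    mk K (v + w) hvw ∈ line (mk K v hv) (mk K w hw) := by
  simp only [line, Set.mem_ofPred_eq, submodule_mk, Submodule.span_singleton_le_iff_mem]
  exact Submodule.add_mem _ (Submodule.mem_sup_left (Submodule.mem_span_singleton_self v))
    (Submodule.mem_sup_right (Submodule.mem_span_singleton_self w))

variable [Finite K]

theorem ncard_line {P Q : ℙ K V} (hPQ : P ≠ Q) : (line P Q).ncard = Nat.card K + 1 := by
  rw [line, ncard_setOf_submodule_le, card_of_finrank_two _ _ (finrank_sup_submodule_of_ne hPQ)]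

theorem finite_line {P Q : ℙ K V} (hPQ : P ≠ Q) : (line P Q).Finite :=
  Set.finite_of_ncard_pos ((ncard_line hPQ).trans_gt (Nat.succ_pos _))

theorem line_subset_of_ncard_inter_line {U : Set (ℙ K V)} {P Q : ℙ K V} (hPQ : P ≠ Q)
    (hP : P ∈ U) (hQ : Q ∈ U)
    (hU : (U ∩ line P Q).ncard = 0 ∨ (U ∩ line P Q).ncard = 1 ∨
      (U ∩ line P Q).ncard = Nat.card K + 1) :
    line P Q ⊆ U := by
  have hPQ_mem : {P, Q} ⊆ U ∩ line P Q :=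
    Set.pair_subset ⟨hP, left_mem_line P Q⟩ ⟨hQ, right_mem_line P Q⟩
  have two_le : 2 ≤ (U ∩ line P Q).ncard := by
    rw [← Set.ncard_pair hPQ]
    exact Set.ncard_le_ncard hPQ_mem ((finite_line hPQ).subset Set.inter_subset_right)
  have full : (U ∩ line P Q).ncard = (line P Q).ncard := by
    rw [ncard_line hPQ]
    omega
  exact Set.inter_eq_right.mp <|
    Set.eq_of_subset_of_ncard_le Set.inter_subset_right full.ge (finite_line hPQ)

end Projectivization

/-- If a set `U` of points of `PG(n,q)` meets every line in `0`, `1` or `q + 1`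
points, then `U` is the point set of a projective subspace. -/
theorem subspace_of_line_intersections {F : Type*} [Field F] [Fintype F] {n : ℕ}
    (U : Set (Projectivization F (Fin (n + 1) → F)))
    (h : ∀ P Q : Projectivization F (Fin (n + 1) → F), P ≠ Q →
      (U ∩ {R | R.submodule ≤ P.submodule ⊔ Q.submodule}).ncard = 0 ∨
      (U ∩ {R | R.submodule ≤ P.submodule ⊔ Q.submodule}).ncard = 1 ∨
      (U ∩ {R | R.submodule ≤ P.submodule ⊔ Q.submodule}).ncard = Fintype.card F + 1) :
    ∃ W : Projectivization.Subspace F (Fin (n + 1) → F), U = ↑W := by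
  refine ⟨⟨U, fun v w hv hw hvw hvU hwU => ?_⟩, rfl⟩
  have hvw_mem := Projectivization.mk_add_mem_line (K := F) hv hw hvw
  by_cases hPQ : Projectivization.mk F v hv = Projectivization.mk F w hw
  · rw [hPQ, Projectivization.line_self, Set.mem_singleton_iff] at hvw_mem
    rwa [hvw_mem]
  exact Projectivization.line_subset_of_ncard_inter_line hPQ hvU hwU
    (by rw [Nat.card_eq_fintype_card]; exact h _ _ hPQ) hvw_mem
end

section
/- Let F be a finite field with q elements where q > 2, and let U be a subset of the vector space F^n. Suppose that for every pair of distinct points x, y ∈ F^n, the affine line {x + t•(y − x) : t ∈ F} meets U in exactly 0, 1, or q points. Then U is the carrier of an affine subspace of F^n. -/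
theorem line_closed_aux {F : Type*} [Field F] [Fintype F] {n : ℕ}
    (U : Set (Fin n → F))
    (hline : ∀ x ∈ U, ∀ y ∈ U, ∀ t : F, x + t • (y - x) ∈ U)
    {c : F} (hc : c ≠ 1) {p1 p2 p3 : Fin n → F}
    (h1 : p1 ∈ U) (h2 : p2 ∈ U) (h3 : p3 ∈ U) :
    c • (p1 - p2) + p3 ∈ U := by
  have hz : p2 + (1 - c)⁻¹ • (p3 - p2) ∈ U := hline p2 h2 p3 h3 _
  have := hline p1 h1 _ hz (1 - c)
  have hne : (1 : F) - c ≠ 0 := sub_ne_zero.mpr (Ne.symm hc)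
  have heq : p1 + (1 - c) • (p2 + (1 - c)⁻¹ • (p3 - p2) - p1)
      = c • (p1 - p2) + p3 := by
    match_scalars <;> field_simp <;> ring
  rwa [heq] at this

/-- If `q > 2` and a set `U ⊆ F^n = AG(n,q)` meets every affine line in `0`, `1` or
`q` points, then `U` is the carrier of an affine subspace of `F^n`. -/
theorem affineSubspace_of_line_intersections {F : Type*} [Field F] [Fintype F] {n : ℕ}
    (hq : 2 < Fintype.card F) (U : Set (Fin n → F))
    (h : ∀ x y : Fin n → F, x ≠ y →
      (U ∩ {p | ∃ t : F, p = x + t • (y - x)}).ncard = 0 ∨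
      (U ∩ {p | ∃ t : F, p = x + t • (y - x)}).ncard = 1 ∨
      (U ∩ {p | ∃ t : F, p = x + t • (y - x)}).ncard = Fintype.card F) :
    ∃ A : AffineSubspace F (Fin n → F), U = ↑A := by
  classical
  -- U is closed under lines
  have hline : ∀ x ∈ U, ∀ y ∈ U, ∀ t : F, x + t • (y - x) ∈ U := by
    intro x hx y hy t
    by_cases hxy : x = y
    · subst hxy; simpa using hx
    · have hxL : x ∈ {p | ∃ t : F, p = x + t • (y - x)} := ⟨0, by simp⟩
      have hyL : y ∈ {p | ∃ t : F, p = x + t • (y - x)} := ⟨1, by simp⟩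
      have hSfin : (U ∩ {p | ∃ t : F, p = x + t • (y - x)}).Finite := Set.toFinite _
      have h2 : 1 < (U ∩ {p | ∃ t : F, p = x + t • (y - x)}).ncard := by
        rw [Set.one_lt_ncard_iff hSfin]
        exact ⟨x, y, ⟨hx, hxL⟩, ⟨hy, hyL⟩, hxy⟩
      have hcard : (U ∩ {p | ∃ t : F, p = x + t • (y - x)}).ncard = Fintype.card F := by
        rcases h x y hxy with h0 | h1 | hq' <;> omega
      have hLcard : ({p | ∃ t : F, p = x + t • (y - x)} : Set (Fin n → F)).ncard
          ≤ Fintype.card F := by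
        have hrange : ({p | ∃ t : F, p = x + t • (y - x)} : Set (Fin n → F))
            = (fun t : F => x + t • (y - x)) '' Set.univ := by
          ext p; simp [eq_comm]
        rw [hrange]
        calc ((fun t : F => x + t • (y - x)) '' Set.univ).ncard
            ≤ (Set.univ : Set F).ncard := Set.ncard_image_le (Set.toFinite _)
          _ = Fintype.card F := by rw [Set.ncard_univ, Nat.card_eq_fintype_card]
      have hEq : U ∩ {p | ∃ t : F, p = x + t • (y - x)}
          = {p | ∃ t : F, p = x + t • (y - x)} :=
        Set.eq_of_subset_of_ncard_le Set.inter_subset_right (by omega) (Set.toFinite _)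
      have : x + t • (y - x) ∈ U ∩ {p | ∃ t : F, p = x + t • (y - x)} := by
        rw [hEq]; exact ⟨t, rfl⟩
      exact this.1
  -- build the affine subspace
  refine ⟨⟨U, ?_⟩, rfl⟩
  intro c p1 p2 p3 h1 h2 h3
  simp only [vsub_eq_sub, vadd_eq_add]
  obtain ⟨a, ha⟩ : ∃ a : F, a ∉ ({1, c - 1} : Finset F) := by
    by_contra hcon
    push_neg at hcon
    have hsub : (Finset.univ : Finset F) ⊆ {1, c - 1} := fun x _ => hcon x
    have hle := Finset.card_le_card hsub
    rw [Finset.card_univ] at hle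
    have h2' : ({1, c - 1} : Finset F).card ≤ 2 :=
      (Finset.card_insert_le _ _).trans (by simp)
    omega
  simp only [Finset.mem_insert, Finset.mem_singleton, not_or] at ha
  obtain ⟨ha1, ha2⟩ := ha
  have hq1 : (c - a) • (p1 - p2) + p3 ∈ U :=
    line_closed_aux U hline (fun hcon => ha2 (by linear_combination -hcon)) h1 h2 h3
  have := line_closed_aux U hline ha1 h1 h2 hq1
  have heq : a • (p1 - p2) + ((c - a) • (p1 - p2) + p3) = c • (p1 - p2) + p3 := by
    module
  rwa [heq] at this
end

section
/- Let U be a nonempty set of m points of PG(n,2), identified with a set of m nonzero vectors of (ZMod 2)^{n+1}. Then there exists a nonzero linear functional f : (ZMod 2)^{n+1} → ZMod 2 (equivalently, a hyperplane H_f of PG(n,2)) such that, with u = |{x ∈ U : f(x) = 0}|, one has |u − m/2| > sqrt(m/4 − m²/2^{n+3}) as real numbers. -/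
/-!
Write `S(w) = ∑_{x ∈ U} (-1)^(w ⬝ᵥ x)`, so that the hyperplane `w ⬝ᵥ x = 0` meets `U` in
`(m + S(w)) / 2` points. By orthogonality of characters `∑_w S(w)² = 2^(n+1) m`, and
`S(0) = m`, so over the `2^(n+1) - 1` nonzero `w` the mean of `S(w)²` is
`m (2^(n+1) - m) / (2^(n+1) - 1)`. Since `0 < m < 2^(n+1)`, this strictly exceeds
`m (2^(n+1) - m) / 2^(n+1) = 4 (m/4 - m²/2^(n+3))`, so some nonzero `w` does too.
-/

open Finset Matrix

noncomputable abbrev signChar : AddChar (ZMod 2) ℝ :=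
  AddChar.zmodChar 2 (by norm_num : (-1 : ℝ) ^ 2 = 1)

lemma signChar_one : signChar 1 = -1 := by
  rw [AddChar.zmodChar_apply, show ZMod.val (1 : ZMod 2) = 1 from rfl, pow_one]

lemma ite_eq_zero_eq_one_add_signChar_div_two (a : ZMod 2) :
    (if a = 0 then 1 else 0 : ℝ) = (1 + signChar a) / 2 := by
  obtain rfl | rfl : a = 0 ∨ a = 1 := by decide +revert
  · norm_num
  · norm_num [signChar_one]

lemma cast_card_filter_eq_zero {α : Type*} (U : Finset α) (g : α → ZMod 2) :
    (#(U.filter (g · = 0)) : ℝ) = (#U + ∑ x ∈ U, signChar (g x)) / 2 := by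
  rw [card_filter, Nat.cast_sum]
  push_cast
  simp_rw [ite_eq_zero_eq_one_add_signChar_div_two, ← sum_div, sum_add_distrib, sum_const,
    nsmul_one]

variable {ι : Type*} [Fintype ι]

noncomputable def charSum (U : Finset (ι → ZMod 2)) (w : ι → ZMod 2) : ℝ :=
  ∑ x ∈ U, signChar (w ⬝ᵥ x)

lemma charSum_zero (U : Finset (ι → ZMod 2)) : charSum U 0 = #U := by
  simp [charSum]

variable [DecidableEq ι]

lemma sum_signChar_dotProduct (z : ι → ZMod 2) :
    ∑ w, signChar (w ⬝ᵥ z) = if z = 0 then 2 ^ Fintype.card ι else 0 := by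
  split_ifs with hz
  · simp [hz]
  obtain ⟨i, hi⟩ := Function.ne_iff.mp hz
  let φ : AddChar (ι → ZMod 2) ℝ :=
    signChar.compAddMonoidHom (dotProductEquiv (ZMod 2) ι z).toAddMonoidHom
  have hφ : φ ≠ 0 := by
    rw [AddChar.ne_zero_iff]
    refine ⟨Pi.single i 1, ?_⟩
    have hzi : z i = 1 := Fin.eq_one_of_ne_zero _ hi
    change signChar (z ⬝ᵥ Pi.single i 1) ≠ 1
    rw [dotProduct_single, mul_one, hzi, signChar_one]
    norm_num
  have := AddChar.sum_eq_zero_iff_ne_zero.mpr hφ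
  simpa [φ, dotProduct_comm] using this

lemma sum_charSum_sq (U : Finset (ι → ZMod 2)) :
    ∑ w, charSum U w ^ 2 = 2 ^ Fintype.card ι * #U := by
  have hpair (w x y : ι → ZMod 2) :
      signChar (w ⬝ᵥ x) * signChar (w ⬝ᵥ y) = signChar (w ⬝ᵥ (x + y)) := by
    rw [dotProduct_add, AddChar.map_add_eq_mul]
  calc ∑ w, charSum U w ^ 2 = ∑ x ∈ U, ∑ y ∈ U, ∑ w, signChar (w ⬝ᵥ (x + y)) := by
        simp_rw [charSum, sq, sum_mul_sum, hpair]
        rw [sum_comm]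
        exact sum_congr rfl fun x _ => sum_comm
    _ = ∑ x ∈ U, ∑ y ∈ U, if x = y then 2 ^ Fintype.card ι else 0 := by
        simp_rw [sum_signChar_dotProduct, add_eq_zero_iff_eq_neg, ZModModule.neg_eq_self]
    _ = 2 ^ Fintype.card ι * #U := by
        simp_rw [sum_ite_eq]
        simp [mul_comm]

lemma card_lt_two_pow_of_zero_notMem {U : Finset (ι → ZMod 2)} (h0 : 0 ∉ U) :
    #U < 2 ^ Fintype.card ι := by
  calc #U < #(univ : Finset (ι → ZMod 2)) :=
        card_lt_card (ssubset_univ_iff.mpr fun h => h0 (h ▸ mem_univ 0))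
    _ = 2 ^ Fintype.card ι := by simp

lemma exists_ne_zero_lt_charSum_sq {U : Finset (ι → ZMod 2)} (h0 : 0 ∉ U) (hne : U.Nonempty) :
    ∃ w ≠ 0, #U * (2 ^ Fintype.card ι - #U) / 2 ^ Fintype.card ι < charSum U w ^ 2 := by
  set N : ℝ := 2 ^ Fintype.card ι
  have hmN : (#U : ℝ) < N := by
    simpa [N] using (Nat.cast_lt (α := ℝ)).2 (card_lt_two_pow_of_zero_notMem h0)
  have hm : (0 : ℝ) < #U := by exact_mod_cast hne.card_pos
  have hsum : ∑ w ∈ univ.erase 0, charSum U w ^ 2 = #U * (N - #U) := by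
    rw [sum_erase_eq_sub (mem_univ 0), sum_charSum_sq, charSum_zero]
    ring
  have hcard : (#(univ.erase (0 : ι → ZMod 2)) : ℝ) = N - 1 := by
    rw [card_erase_of_mem (mem_univ 0), Nat.cast_sub (card_pos.2 univ_nonempty)]
    simp [N]
  obtain ⟨w, hw, hlt⟩ := exists_lt_of_sum_lt (s := univ.erase 0)
    (f := fun _ => (#U * (N - #U) / N : ℝ)) (g := fun w => charSum U w ^ 2) (by
      rw [sum_const, nsmul_eq_mul, hcard, hsum, mul_div_left_comm]
      have : (N - 1) / N < 1 := by rw [div_lt_one (by positivity)]; linarith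
      have : 0 < #U * (N - #U) := by nlinarith
      nlinarith)
  exact ⟨w, ne_of_mem_erase hw, hlt⟩

/-- For a nonempty set `U` of `m` points of `PG(n,2)` (nonzero vectors of
`(ZMod 2)^(n+1)`), there is a nonzero linear functional `f` (a hyperplane `H_f`)
with `| |U ∩ H_f| − m/2 | > sqrt (m/4 − m²/2^(n+3))`. -/
theorem exists_hyperplane_large_deviation (n : ℕ) (U : Finset (Fin (n + 1) → ZMod 2))
    (h0 : (0 : Fin (n + 1) → ZMod 2) ∉ U) (hne : U.Nonempty) (m : ℕ) (hm : U.card = m) :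
    ∃ f : (Fin (n + 1) → ZMod 2) →ₗ[ZMod 2] ZMod 2, f ≠ 0 ∧
      |((U.filter fun x => f x = 0).card : ℝ) - m / 2| >
        Real.sqrt (m / 4 - m ^ 2 / 2 ^ (n + 3)) := by
  obtain ⟨w, hw, hlt⟩ := exists_ne_zero_lt_charSum_sq h0 hne
  refine ⟨dotProductEquiv (ZMod 2) _ w, by simpa using hw, ?_⟩
  have hdev : ((U.filter fun x => w ⬝ᵥ x = 0).card : ℝ) - m / 2 = charSum U w / 2 := by
    rw [cast_card_filter_eq_zero, hm, charSum]
    ring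
  have hmN : (m : ℝ) < 2 ^ (n + 1) := by
    simpa [hm] using (Nat.cast_lt (α := ℝ)).2 (card_lt_two_pow_of_zero_notMem h0)
  have hbound : (m / 4 - m ^ 2 / 2 ^ (n + 3) : ℝ) = m * (2 ^ (n + 1) - m) / 2 ^ (n + 1) / 4 := by
    rw [pow_add 2 n 3, pow_add 2 n 1]
    field_simp
    ring
  simp only [dotProductEquiv_apply_apply, hdev, gt_iff_lt, hbound, ← Real.sqrt_sq_eq_abs]
  refine Real.sqrt_lt_sqrt (by positivity) ?_
  simp only [Fintype.card_fin, hm] at hlt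
  linarith
end

section
/- Every saturating set S of the projective space PG(n,2) (the projectivization of (ZMod 2)^{n+1}) satisfies |S| ≥ sqrt(2^{n+2} − 2) − 1/2 as real numbers. -/
set_option maxHeartbeats 1000000

/-- A set of points of a projective space is saturating if every point lies on a line
spanned by (at most) two of its points. -/
def IsSaturating {F V : Type*} [Field F] [AddCommGroup V] [Module F V]
    (S : Finset (Projectivization F V)) : Prop :=
  ∀ P : Projectivization F V, ∃ A ∈ S, ∃ B ∈ S,
    P.submodule ≤ A.submodule ⊔ B.submodule

private lemma zmod2_cases (x : ZMod 2) : x = 0 ∨ x = 1 := by revert x; decide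

/-- Every saturating set `S` of `PG(n,2)` satisfies `|S| ≥ sqrt (2^(n+2) − 2) − 1/2`. -/
theorem saturating_lower_bound_q2 {n : ℕ}
    (S : Finset (Projectivization (ZMod 2) (Fin (n + 1) → ZMod 2)))
    (hS : IsSaturating S) :
    (S.card : ℝ) ≥ Real.sqrt (2 ^ (n + 2) - 2) - 1 / 2 := by
  classical
  set V := (Fin (n + 1) → ZMod 2)
  -- every nonzero vector is a rep, or sum of two distinct reps, of points of S
  have key : ∀ v : {v : V // v ≠ 0}, ∃ A ∈ S, ∃ B ∈ S,
      (v : V) = A.rep ∨ (A ≠ B ∧ (v : V) = A.rep + B.rep) := by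
    rintro ⟨v, hv⟩
    obtain ⟨A, hA, B, hB, hle⟩ := hS (Projectivization.mk (ZMod 2) v hv)
    have hv_mem : v ∈ A.submodule ⊔ B.submodule := by
      apply hle
      rw [Projectivization.submodule_mk]
      exact Submodule.mem_span_singleton_self v
    rw [Projectivization.submodule_eq A, Projectivization.submodule_eq B] at hv_mem
    obtain ⟨y, hy, z, hz, hyz⟩ := Submodule.mem_sup.1 hv_mem
    obtain ⟨c, rfl⟩ := Submodule.mem_span_singleton.1 hy
    obtain ⟨d, rfl⟩ := Submodule.mem_span_singleton.1 hz
    have hadd : ∀ w : V, w + w = 0 := by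
      intro w
      have h12 : w + w = ((1 : ZMod 2) + 1) • w := by rw [add_smul, one_smul]
      rw [h12, show ((1 : ZMod 2) + 1) = 0 from by decide, zero_smul]
    rcases zmod2_cases c with rfl | rfl <;> rcases zmod2_cases d with rfl | rfl
    · exfalso; apply hv; rw [← hyz]; simp
    · exact ⟨B, hB, A, hA, Or.inl (show v = B.rep by rw [← hyz]; simp)⟩
    · exact ⟨A, hA, B, hB, Or.inl (show v = A.rep by rw [← hyz]; simp)⟩
    · refine ⟨A, hA, B, hB, Or.inr ⟨?_, show v = A.rep + B.rep by rw [← hyz]; simp⟩⟩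
      rintro rfl
      apply hv
      rw [← hyz]
      simp only [one_smul]
      exact hadd _
  choose A hA B hB hcase using key
  set f : {v : V // v ≠ 0} → Sym2 (Projectivization (ZMod 2) V) :=
    fun v => if (v : V) = (A v).rep then s(A v, A v) else s(A v, B v) with hf
  -- properties of f in the non-diagonal case
  have hnd : ∀ v : {v : V // v ≠ 0}, ¬((v : V) = (A v).rep) →
      A v ≠ B v ∧ (v : V) = (A v).rep + (B v).rep := by
    intro v h
    rcases hcase v with h' | h'
    · exact absurd h' h
    · exact h'
  have hmaps : ∀ v ∈ (Finset.univ : Finset {v : V // v ≠ 0}), f v ∈ S.sym2 := by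
    intro v _
    rw [hf]
    dsimp only
    split_ifs
    · exact Finset.mk_mem_sym2_iff.2 ⟨hA v, hA v⟩
    · exact Finset.mk_mem_sym2_iff.2 ⟨hA v, hB v⟩
  have hinj : Set.InjOn f (Finset.univ : Finset {v : V // v ≠ 0}) := by
    intro v _ w _ hvw
    rw [hf] at hvw
    dsimp only at hvw
    split_ifs at hvw with h1 h2 h2
    · -- both diagonal
      rw [Sym2.eq_iff] at hvw
      have hAvw : A v = A w := by tauto
      exact Subtype.ext (by rw [h1, h2, hAvw])
    · -- diag vs nondiag
      obtain ⟨hne, _⟩ := hnd w h2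
      rw [Sym2.eq_iff] at hvw
      rcases hvw with ⟨ha, hb⟩ | ⟨ha, hb⟩
      · exact absurd (ha.symm.trans hb) hne
      · exact absurd (hb.symm.trans ha) hne
    · obtain ⟨hne, _⟩ := hnd v h1
      rw [Sym2.eq_iff] at hvw
      rcases hvw with ⟨ha, hb⟩ | ⟨ha, hb⟩
      · exact absurd (ha.trans hb.symm) hne
      · exact absurd (ha.trans hb.symm) hne
    · obtain ⟨_, he1⟩ := hnd v h1
      obtain ⟨_, he2⟩ := hnd w h2
      rw [Sym2.eq_iff] at hvw
      rcases hvw with ⟨ha, hb⟩ | ⟨ha, hb⟩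
      · exact Subtype.ext (by rw [he1, he2, ha, hb])
      · exact Subtype.ext (by rw [he1, he2, ha, hb, add_comm])
  have hcard : (Finset.univ : Finset {v : V // v ≠ 0}).card ≤ S.sym2.card :=
    Finset.card_le_card_of_injOn f hmaps hinj
  rw [Finset.card_univ, Finset.card_sym2] at hcard
  have hcardV : Fintype.card {v : V // v ≠ 0} = 2 ^ (n + 1) - 1 := by
    rw [Fintype.card_subtype_compl, Fintype.card_subtype_eq (0 : V)]
    simp [V]
  rw [hcardV] at hcard
  set k := S.card
  -- 2 * (2^(n+1) - 1) ≤ k * (k+1)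
  have h2 : 2 ^ (n + 1) - 1 ≤ (k + 1) * k / 2 := by
    rwa [Nat.choose_two_right, Nat.add_sub_cancel] at hcard
  have heven : 2 ∣ (k + 1) * k := by
    rcases Nat.even_mul_succ_self k with ⟨m, hm⟩
    exact ⟨m, by rw [mul_comm (k+1) k, hm]; ring⟩
  have h3 : 2 * (2 ^ (n + 1) - 1) ≤ (k + 1) * k := by
    calc 2 * (2 ^ (n + 1) - 1) ≤ 2 * ((k + 1) * k / 2) := by omega
    _ = (k + 1) * k := Nat.mul_div_cancel' heven
  have h1le : (1 : ℕ) ≤ 2 ^ (n + 1) := Nat.one_le_two_pow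
  have h4 : (2 : ℝ) ^ (n + 2) - 2 ≤ (k + 1) * k := by
    have := (Nat.cast_le (α := ℝ)).2 h3
    push_cast [Nat.cast_sub h1le] at this
    have hp : (2 : ℝ) ^ (n + 2) = 2 ^ (n + 1) * 2 := pow_succ 2 (n + 1)
    nlinarith [this, hp]
  have hk0 : (0 : ℝ) ≤ (k : ℝ) + 1 / 2 := by positivity
  have h5 : Real.sqrt (2 ^ (n + 2) - 2) ≤ (k : ℝ) + 1 / 2 := by
    rw [show ((k : ℝ) + 1 / 2) = Real.sqrt (((k : ℝ) + 1 / 2) ^ 2) from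
      (Real.sqrt_sq hk0).symm]
    apply Real.sqrt_le_sqrt
    nlinarith [h4]
  linarith [h5]
end
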